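/- arXiv:1703.05858 — 3 statements merged into one kernel-verified Lean document; each statement's English description precedes it below -/
import Mathlib

section
/- Suppose Γ and Γ' are connected simple graphs each with at least two vertices. If both are bipartite, then the direct product Γ × Γ' has exactly two connected components; if at least one is non-bipartite, then Γ × Γ' is connected. (Weichsel's Theorem.) -/
/-- The direct (tensor/categorical) product of simple graphs: `(v,v')` is adjacent
to `(u,u')` iff `v ~ u` and `v' ~ u'`. -/
def SimpleGraph.directProd {α β : Type} (G : SimpleGraph α) (H : SimpleGraph β) :
    SimpleGraph (α × β) where
  Adj a b := G.Adj a.1 b.1 ∧ H.Adj a.2 b.2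
  symm := ⟨fun a b h => ⟨G.adj_symm h.1, H.adj_symm h.2⟩⟩
  loopless := ⟨fun a h => G.irrefl h.1⟩

/-!
A walk in `G × H` is exactly a pair of walks of equal length in `G` and in `H`. A walk can
be lengthened by any even amount by going back and forth along an edge at its start, so
`(a, b)` and `(c, d)` lie in the same component iff some walks `a → c` and `b → d` have the
same parity. In a connected non-bipartite graph an odd closed walk supplies walks of both
parities between any two vertices, so the product is connected. If both factors are
bipartite, the parity of every walk is fixed by the 2-colourings `cG`, `cH`, and the
components are the two fibres of `(x, y) ↦ cG x xor cH y`.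
-/

namespace SimpleGraph

variable {V α β : Type} {G : SimpleGraph α} {H : SimpleGraph β}

lemma card_connectedComponent_eq_of_reachable_iff {Γ : SimpleGraph V} {γ : Type} (f : V → γ)
    (hf : Function.Surjective f) (h : ∀ x y, Γ.Reachable x y ↔ f x = f y) :
    Nat.card Γ.ConnectedComponent = Nat.card γ := by
  refine Nat.card_eq_of_bijective (Quot.lift f fun x y hxy => (h x y).1 hxy) ⟨?_, ?_⟩
  · refine ConnectedComponent.ind₂ fun x y hxy => ConnectedComponent.sound ((h x y).2 hxy)
  · exact fun t => (hf t).imp' Γ.connectedComponentMk fun _ hx => hx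

lemma Walk.exists_length_eq_add_two_mul {a c : α} (ha : ∃ e, G.Adj a e) (p : G.Walk a c)
    (k : ℕ) : ∃ p' : G.Walk a c, p'.length = p.length + 2 * k := by
  obtain ⟨e, hae⟩ := ha
  induction k with
  | zero => exact ⟨p, rfl⟩
  | succ k ih =>
    obtain ⟨p', hp'⟩ := ih
    exact ⟨.cons hae (.cons hae.symm p'), by simp only [Walk.length_cons, hp']; ring⟩

def directProdFst : G.directProd H →g G := ⟨Prod.fst, And.left⟩

def directProdSnd : G.directProd H →g H := ⟨Prod.snd, And.right⟩

lemma Walk.directProd_reachable_of_length_eq {a c : α} {b d : β} (p : G.Walk a c)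
    (q : H.Walk b d) (h : p.length = q.length) :
    (G.directProd H).Reachable (a, b) (c, d) := by
  induction p generalizing b with
  | nil => cases q with
    | nil => rfl
    | cons => simp at h
  | cons hG p ih => cases q with
    | nil => simp at h
    | cons hH q =>
      exact (Adj.reachable (show (G.directProd H).Adj _ _ from ⟨hG, hH⟩)).trans
        (ih q (by simpa using h))

lemma directProd_reachable_iff {a c : α} {b d : β} (ha : ∃ e, G.Adj a e)
    (hb : ∃ e, H.Adj b e) :
    (G.directProd H).Reachable (a, b) (c, d) ↔
      ∃ (p : G.Walk a c) (q : H.Walk b d), (Even p.length ↔ Even q.length) := by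
  constructor
  · rintro ⟨w⟩
    exact ⟨w.map directProdFst, w.map directProdSnd, iff_of_eq <|
      congrArg Even <| (w.length_map directProdFst).trans (w.length_map directProdSnd).symm⟩
  · rintro ⟨p, q, hpq⟩
    rw [Nat.even_iff, Nat.even_iff] at hpq
    rcases le_total p.length q.length with hle | hle
    · obtain ⟨p', hp'⟩ := p.exists_length_eq_add_two_mul ha ((q.length - p.length) / 2)
      exact p'.directProd_reachable_of_length_eq q (by omega)
    · obtain ⟨q', hq'⟩ := q.exists_length_eq_add_two_mul hb ((p.length - q.length) / 2)
      exact p.directProd_reachable_of_length_eq q' (by omega)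

lemma Connected.exists_walk_even_length_iff (hG : G.Connected) (h : ¬ G.Colorable 2)
    (a c : α) (n : ℕ) : ∃ p : G.Walk a c, (Even p.length ↔ Even n) := by
  obtain ⟨u, w, hw⟩ : ∃ u, ∃ w : G.Walk u u, ¬ Even w.length := by
    simpa [two_colorable_iff_forall_loop_even] using h
  obtain ⟨p⟩ := hG.preconnected a c
  by_cases hp : Even p.length ↔ Even n
  · exact ⟨p, hp⟩
  · obtain ⟨r⟩ := hG.preconnected a u
    refine ⟨r.append (w.append (r.reverse.append p)), ?_⟩
    simp only [Walk.length_append, Walk.length_reverse, Nat.even_iff] at hw hp ⊢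
    omega

variable [Nontrivial α] [Nontrivial β]

lemma directProd_connected_of_not_colorable_left (hG : G.Connected) (hH : H.Connected)
    (h : ¬ G.Colorable 2) : (G.directProd H).Connected := by
  refine Connected.mk fun ⟨a, b⟩ ⟨c, d⟩ => ?_
  obtain ⟨q⟩ := hH.preconnected b d
  obtain ⟨p, hp⟩ := hG.exists_walk_even_length_iff h a c q.length
  exact (directProd_reachable_iff (hG.preconnected.exists_adj_of_nontrivial a)
    (hH.preconnected.exists_adj_of_nontrivial b)).2 ⟨p, q, hp⟩

lemma directProd_connected_of_not_colorable_right (hG : G.Connected) (hH : H.Connected)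
    (h : ¬ H.Colorable 2) : (G.directProd H).Connected := by
  refine Connected.mk fun ⟨a, b⟩ ⟨c, d⟩ => ?_
  obtain ⟨p⟩ := hG.preconnected a c
  obtain ⟨q, hq⟩ := hH.exists_walk_even_length_iff h b d p.length
  exact (directProd_reachable_iff (hG.preconnected.exists_adj_of_nontrivial a)
    (hH.preconnected.exists_adj_of_nontrivial b)).2 ⟨p, q, hq.symm⟩

lemma directProd_reachable_iff_of_coloring (hG : G.Connected) (hH : H.Connected)
    (cG : G.Coloring Bool) (cH : H.Coloring Bool) (x y : α × β) :
    (G.directProd H).Reachable x y ↔ xor (cG x.1) (cH x.2) = xor (cG y.1) (cH y.2) := by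
  have parity_iff (p : G.Walk x.1 y.1) (q : H.Walk x.2 y.2) :
      (Even p.length ↔ Even q.length) ↔ xor (cG x.1) (cH x.2) = xor (cG y.1) (cH y.2) := by
    rw [cG.even_length_iff_congr, cH.even_length_iff_congr]
    cases cG x.1 <;> cases cG y.1 <;> cases cH x.2 <;> cases cH y.2 <;> decide
  rw [directProd_reachable_iff (hG.preconnected.exists_adj_of_nontrivial x.1)
    (hH.preconnected.exists_adj_of_nontrivial x.2)]
  constructor
  · rintro ⟨p, q, hpq⟩
    exact (parity_iff p q).1 hpq
  · intro hxy
    obtain ⟨p⟩ := hG.preconnected x.1 y.1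
    obtain ⟨q⟩ := hH.preconnected x.2 y.2
    exact ⟨p, q, (parity_iff p q).2 hxy⟩

lemma card_connectedComponent_directProd_of_coloring (hG : G.Connected) (hH : H.Connected)
    (cG : G.Coloring Bool) (cH : H.Coloring Bool) :
    Nat.card (G.directProd H).ConnectedComponent = 2 := by
  rw [card_connectedComponent_eq_of_reachable_iff (fun x => xor (cG x.1) (cH x.2)) ?_
    (directProd_reachable_iff_of_coloring hG hH cG cH), Nat.card_eq_fintype_card,
    Fintype.card_bool]
  obtain ⟨a⟩ := hG.nonempty
  obtain ⟨b⟩ := hH.nonempty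
  obtain ⟨a', haa'⟩ := hG.preconnected.exists_adj_of_nontrivial a
  have hne := cG.valid haa'
  intro t
  by_cases ht : t = xor (cG a) (cH b)
  · exact ⟨(a, b), ht.symm⟩
  · refine ⟨(a', b), show xor (cG a') (cH b) = t from ?_⟩
    revert hne ht
    cases cG a <;> cases cG a' <;> cases cH b <;> cases t <;> decide

end SimpleGraph

open SimpleGraph in
/-- Weichsel's theorem: Suppose `G` and `H` are connected simple
graphs each with at least two vertices.  If both are bipartite, then `G × H` has
exactly two connected components; if at least one is non-bipartite, then `G × H`
is connected. -/
theorem weichsel {α β : Type} (G : SimpleGraph α) (H : SimpleGraph β)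
    [Nontrivial α] [Nontrivial β] (hG : G.Connected) (hH : H.Connected) :
    ((G.Colorable 2 ∧ H.Colorable 2) →
      Nat.card (G.directProd H).ConnectedComponent = 2) ∧
    ((¬ G.Colorable 2 ∨ ¬ H.Colorable 2) → (G.directProd H).Connected) := by
  refine ⟨fun ⟨⟨cG⟩, ⟨cH⟩⟩ => ?_, fun h => ?_⟩
  · exact card_connectedComponent_directProd_of_coloring hG hH
      (G.recolorOfEquiv finTwoEquiv cG) (H.recolorOfEquiv finTwoEquiv cH)
  · rcases h with hG' | hH'
    · exact directProd_connected_of_not_colorable_left hG hH hG'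
    · exact directProd_connected_of_not_colorable_right hG hH hH'
end

section
/- Let n ≥ 3, m ≥ 1, and let H ≤ (ℤ/2nℤ)^m be the subgroup generated by S = {(ε₁,…,ε_m) : εᵢ = ±1}. Then H = {(a₁,…,a_m) : a₁ ≡ a₂ ≡ ⋯ ≡ a_m (mod 2)}, and for u = (a₁,…,a_m) ∈ H with representatives aᵢ ∈ {−(n−1),…,n}, the distance from u to 0 in the Cayley graph Cay(H, S) equals max{|a₁|, …, |a_m|}. -/
/-- The connection set `S = {(ε₁,…,ε_m) : εᵢ = ±1}` in `(ℤ/2nℤ)^m`. -/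
def signSet (n m : ℕ) : Set (Fin m → ZMod (2 * n)) :=
  {s | ∀ i, s i = 1 ∨ s i = -1}

/-- The Cayley graph of `(ℤ/2nℤ)^m` with connection set `S`; its restriction to the
subgroup `H` generated by `S` (equivalently, the connected component of `0`) is the
Cayley graph `Cay(H, S)`, and distances between elements of `H` agree with those in
`Cay(H, S)` since every walk from an element of `H` stays in `H`. -/
def cayleySign (n m : ℕ) : SimpleGraph (Fin m → ZMod (2 * n)) where
  Adj x y := x ≠ y ∧ (x - y) ∈ signSet n m
  symm := by
    refine ⟨?_⟩
    rintro x y ⟨hne, hs⟩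
    refine ⟨hne.symm, fun i => ?_⟩
    rcases hs i with h | h
    · right
      have : (y - x) i = -((x - y) i) := by simp [Pi.sub_apply]
      rw [this, h]
    · left
      have : (y - x) i = -((x - y) i) := by simp [Pi.sub_apply]
      rw [this, h]; ring
  loopless := ⟨fun x h => h.1 rfl⟩

/-!
Reducing modulo 2 shows that the coordinates of every element of `H` share a parity.
Conversely, let `M = max |aᵢ|` with every `aᵢ ≡ M (mod 2)`, and write `aᵢ = 2pᵢ - M` with
`0 ≤ pᵢ ≤ M`. The `t`-th of `M` sign vectors has `i`-th coordinate `+1` if `t < pᵢ` and `-1`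
otherwise; these sum to `a`, giving a walk of length `M` from `a` to `0`. No walk is shorter,
because adding `±1` to a coordinate changes its absolute value `|aᵢ|` by at most one.
-/

open Finset

theorem Finset.sum_range_ite_lt_one_neg_one {R : Type*} [Ring R] {p M : ℕ} (h : p ≤ M) :
    ∑ t ∈ range M, (if t < p then (1 : R) else -1) = 2 * p - M := by
  rw [← sum_range_add_sum_Ico _ h,
    sum_congr rfl fun t ht => if_pos (mem_range.mp ht),
    sum_congr rfl fun t ht => if_neg (not_lt.mpr (mem_Ico.mp ht).1)]
  simp only [sum_const, card_range, Nat.card_Ico, nsmul_eq_mul, mul_one, mul_neg,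
    Nat.cast_sub h]
  rw [two_mul]
  abel

theorem Int.exists_eq_two_mul_sub_of_natAbs_le {z : ℤ} {M : ℕ} (hle : z.natAbs ≤ M)
    (hpar : z % 2 = M % 2) : ∃ p ≤ M, z = 2 * (p : ℤ) - M :=
  ⟨((M + z) / 2).toNat, by omega, by omega⟩

theorem SimpleGraph.Walk.apply_le_apply_add_length {V : Type*} {G : SimpleGraph V}
    (f : V → ℕ) (hf : ∀ x y, G.Adj x y → f x ≤ f y + 1) {u v : V} (p : G.Walk u v) :
    f u ≤ f v + p.length := by
  induction p with
  | nil => simp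
  | cons h _ ih =>
    have := hf _ _ h
    rw [SimpleGraph.Walk.length_cons]
    omega

namespace ZMod

variable {N : ℕ}

theorem natAbs_valMinAbs_intCast_le [NeZero N] (z : ℤ) :
    (z : ZMod N).valMinAbs.natAbs ≤ z.natAbs :=
  natAbs_min_of_le_div_two N _ z (by rw [coe_valMinAbs]) (natAbs_valMinAbs_le _)

theorem natAbs_valMinAbs_add_le_add_one [NeZero N] (x e : ZMod N) (he : e = 1 ∨ e = -1) :
    (x + e).valMinAbs.natAbs ≤ x.valMinAbs.natAbs + 1 := by
  have he : e.valMinAbs.natAbs ≤ 1 := by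
    rcases he with rfl | rfl <;> simpa using natAbs_valMinAbs_intCast_le (N := N) 1
  calc (x + e).valMinAbs.natAbs ≤ (x.valMinAbs + e.valMinAbs).natAbs :=
        natAbs_valMinAbs_add_le x e
    _ ≤ x.valMinAbs.natAbs + e.valMinAbs.natAbs := Int.natAbs_add_le _ _
    _ ≤ x.valMinAbs.natAbs + 1 := by omega

theorem valMinAbs_emod_two [NeZero N] (hN : 2 ∣ N) (x : ZMod N) :
    x.valMinAbs % 2 = x.val % 2 := by
  rw [valMinAbs_def_pos]
  split_ifs <;> omega

theorem castHom_eq_castHom_iff [NeZero N] {d : ℕ} (h : d ∣ N) (x y : ZMod N) :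
    castHom h (ZMod d) x = castHom h (ZMod d) y ↔ x.val % d = y.val % d := by
  rw [castHom_apply, castHom_apply, ← natCast_val, ← natCast_val, natCast_eq_natCast_iff']

theorem exists_sum_range_eq_of_natAbs_valMinAbs_le {ι : Type*} {M : ℕ} (a : ι → ZMod N)
    (hle : ∀ i, (a i).valMinAbs.natAbs ≤ M) (hpar : ∀ i, (a i).valMinAbs % 2 = M % 2) :
    ∃ s : ℕ → ι → ZMod N, (∀ t i, s t i = 1 ∨ s t i = -1) ∧ a = ∑ t ∈ range M, s t := by
  choose p hpM hp using fun i => Int.exists_eq_two_mul_sub_of_natAbs_le (hle i) (hpar i)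
  refine ⟨fun t i => if t < p i then 1 else -1, fun t i => by dsimp only; split_ifs <;> simp, ?_⟩
  funext i
  simp only [Finset.sum_apply]
  rw [sum_range_ite_lt_one_neg_one (hpM i), ← coe_valMinAbs (a i), hp i]
  push_cast
  rfl

end ZMod

section cayleySign

variable {n m : ℕ}

theorem castHom_eq_of_mem_closure_signSet {a : Fin m → ZMod (2 * n)}
    (ha : a ∈ AddSubgroup.closure (signSet n m)) (i j : Fin m) :
    ZMod.castHom (dvd_mul_right 2 n) (ZMod 2) (a i) =
      ZMod.castHom (dvd_mul_right 2 n) (ZMod 2) (a j) := by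
  induction ha using AddSubgroup.closure_induction generalizing i j with
  | mem s hs =>
    rcases hs i with h | h <;> rcases hs j with h' | h' <;>
      simp only [h, h', map_one, map_neg] <;> decide
  | zero => simp
  | add x y _ _ hx hy => simp only [Pi.add_apply, map_add, hx i j, hy i j]
  | neg x _ hx => simp only [Pi.neg_apply, map_neg, hx i j]

theorem exists_sum_range_signSet_eq [NeZero n] (a : Fin m → ZMod (2 * n))
    (ha : ∀ i j, (a i).val % 2 = (a j).val % 2) :
    ∃ s : ℕ → Fin m → ZMod (2 * n), (∀ t, s t ∈ signSet n m) ∧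
      a = ∑ t ∈ range (univ.sup fun i => (a i).valMinAbs.natAbs), s t := by
  refine ZMod.exists_sum_range_eq_of_natAbs_valMinAbs_le a (fun i => le_sup (f := fun i => (a i).valMinAbs.natAbs) (mem_univ i))
    fun i => ?_
  obtain ⟨i₀, -, hi₀⟩ := exists_mem_eq_sup univ ⟨i, mem_univ i⟩
    fun i => (a i).valMinAbs.natAbs
  have := ha i i₀
  have := ZMod.valMinAbs_emod_two (dvd_mul_right 2 n) (a i)
  have := ZMod.valMinAbs_emod_two (dvd_mul_right 2 n) (a i₀)
  rw [hi₀]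
  omega

theorem cayleySign_edist_le_one {x y : Fin m → ZMod (2 * n)} (h : x - y ∈ signSet n m) :
    (cayleySign n m).edist x y ≤ 1 := by
  rw [SimpleGraph.edist_le_one_iff_adj_or_eq]
  by_cases hxy : x = y
  exacts [Or.inr hxy, Or.inl ⟨hxy, h⟩]

theorem cayleySign_edist_sum_range_le {s : ℕ → Fin m → ZMod (2 * n)}
    (hs : ∀ t, s t ∈ signSet n m) (k : ℕ) :
    (cayleySign n m).edist (∑ t ∈ range k, s t) 0 ≤ k := by
  induction k with
  | zero => simp
  | succ k ih =>
    calc (cayleySign n m).edist (∑ t ∈ range (k + 1), s t) 0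
        ≤ (cayleySign n m).edist (∑ t ∈ range (k + 1), s t) (∑ t ∈ range k, s t) +
            (cayleySign n m).edist (∑ t ∈ range k, s t) 0 := SimpleGraph.edist_triangle
      _ ≤ 1 + k := add_le_add (cayleySign_edist_le_one (by simpa [sum_range_succ] using hs k)) ih
      _ = (k + 1 : ℕ) := by push_cast; exact add_comm _ _

theorem natAbs_valMinAbs_le_add_length [NeZero n] {x y : Fin m → ZMod (2 * n)}
    (w : (cayleySign n m).Walk x y) (i : Fin m) :
    (x i).valMinAbs.natAbs ≤ (y i).valMinAbs.natAbs + w.length :=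
  w.apply_le_apply_add_length _ fun x y h => by
    simpa using ZMod.natAbs_valMinAbs_add_le_add_one (y i) ((x - y) i) (h.2 i)

end cayleySign

theorem cayley_sign_closure_and_dist_general (n m : ℕ) (hn : 3 ≤ n) :
    (∀ a : Fin m → ZMod (2 * n),
      a ∈ AddSubgroup.closure (signSet n m) ↔
        ∀ i j, (a i).val % 2 = (a j).val % 2) ∧
    (∀ a : Fin m → ZMod (2 * n), (∀ i j, (a i).val % 2 = (a j).val % 2) →
      (cayleySign n m).dist a 0 =
        Finset.univ.sup fun i => (a i).valMinAbs.natAbs) := by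
  have : NeZero n := ⟨by omega⟩
  refine ⟨fun a => ⟨fun ha i j => ?_, fun ha => ?_⟩, fun a ha => ?_⟩
  · exact (ZMod.castHom_eq_castHom_iff _ _ _).mp (castHom_eq_of_mem_closure_signSet ha i j)
  · obtain ⟨s, hs, hsum⟩ := exists_sum_range_signSet_eq a ha
    rw [hsum]
    exact AddSubgroup.sum_mem _ fun t _ => AddSubgroup.subset_closure (hs t)
  · obtain ⟨s, hs, hsum⟩ := exists_sum_range_signSet_eq a ha
    have hle := hsum ▸ cayleySign_edist_sum_range_le hs _
    have hreach : (cayleySign n m).Reachable a 0 :=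
      SimpleGraph.edist_ne_top_iff_reachable.mp (ne_top_of_le_ne_top (ENat.natCast_ne_top _) hle)
    obtain ⟨w, hw⟩ := hreach.exists_walk_length_eq_dist
    refine le_antisymm ?_ (Finset.sup_le fun i _ => ?_)
    · exact_mod_cast hreach.coe_dist_eq_edist ▸ hle
    · simpa [hw] using natAbs_valMinAbs_le_add_length w i

/-- Let `n ≥ 3`, `m ≥ 1`, and let `H ≤ (ℤ/2nℤ)^m` be the subgroup
generated by `S = {(ε₁,…,ε_m) : εᵢ = ±1}`.  Then `H = {(a₁,…,a_m) : a₁ ≡ ⋯ ≡ a_m (mod 2)}`,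
and for `u = (a₁,…,a_m) ∈ H`, with each `aᵢ` represented by the unique integer in
`(−n, n]` (via `ZMod.valMinAbs`), the distance from `u` to `0` in the Cayley graph
`Cay(H, S)` equals `max{|a₁|, …, |a_m|}`. -/
theorem cayley_sign_closure_and_dist (n m : ℕ) (hn : 3 ≤ n) (hm : 1 ≤ m) :
    (∀ a : Fin m → ZMod (2 * n),
      a ∈ AddSubgroup.closure (signSet n m) ↔
        ∀ i j, (a i).val % 2 = (a j).val % 2) ∧
    (∀ a : Fin m → ZMod (2 * n), (∀ i j, (a i).val % 2 = (a j).val % 2) →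
      (cayleySign n m).dist a 0 =
        Finset.univ.sup fun i => (a i).valMinAbs.natAbs) :=
  cayley_sign_closure_and_dist_general n m hn
end

section
/- Let n ≥ 3, m ≥ 1, and let Γ be the connected component containing the vertex v = (0,…,0) of the tensor (direct) product of m cycles each of length 2n. If an automorphism of Γ fixes v and all 2^m neighbours (±1, ±1, …, ±1) of v, then it is the identity. (The graph Γ is rigid at v.) -/
/-- The tensor (direct) product of `m` cycles of length `2n`: vertices are
`(ℤ/2nℤ)^m`, and `(b₁,…,b_m)` is adjacent to `(c₁,…,c_m)` iff `bᵢ − cᵢ ≡ ±1 (mod 2n)`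
for all `i`. -/
def cycleTensor (n m : ℕ) : SimpleGraph (Fin m → ZMod (2 * n)) where
  Adj x y := x ≠ y ∧ ∀ i, x i - y i = 1 ∨ x i - y i = -1
  symm := by
    constructor
    rintro x y ⟨hne, hs⟩
    refine ⟨hne.symm, fun i => ?_⟩
    rcases hs i with h | h
    · right
      have : y i - x i = -(x i - y i) := by ring
      rw [this, h]
    · left
      have : y i - x i = -(x i - y i) := by ring
      rw [this, h]; ring
  loopless := ⟨fun x h => h.1 rfl⟩

/-- The connected component of `(0,…,0)` in the tensor product of `m` cycles of
length `2n`, as an induced subgraph. -/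
noncomputable def cycleTensorComp (n m : ℕ) :
    SimpleGraph (((cycleTensor n m).connectedComponentMk 0).supp) :=
  SimpleGraph.induce (((cycleTensor n m).connectedComponentMk 0).supp) (cycleTensor n m)

/-!
Write `‖a‖` for the distance from `a` to `0` on the cycle `ZMod (2n)` and `‖x‖ = maxᵢ ‖xᵢ‖`.
By induction on `k ≥ 1`, `φ` fixes every vertex with `‖x‖ ≤ k`; for `k = 1` these are `0` and
the `(±1, …, ±1)`. If `‖x‖ = k + 1`, the neighbours of `x` with norm `≤ k` are fixed, so `x` and
`φ x` have the same such neighbours. They form the product over `i` of the sets of cycle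
neighbours of `xᵢ` of norm `≤ k`, so these sets agree for `x` and `φ x` coordinatewise. On a cycle
of length `2n ≥ 6` such a set determines the point, provided `‖xᵢ‖ ≡ k + 1 (mod 2)`; this holds
because `‖·‖` changes parity along every edge, so all coordinates of a vertex of the component
have norms of the same parity.
-/

lemma Set.eq_of_univ_pi_eq {ι : Type*} {α : ι → Type*} {s t : ∀ i, Set (α i)}
    (hs : (Set.univ.pi s).Nonempty) (h : Set.univ.pi s = Set.univ.pi t) : s = t := by
  funext i
  rw [← Set.eval_image_univ_pi (i := i) hs, h, Set.eval_image_univ_pi (h ▸ hs)]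

lemma SimpleGraph.ConnectedComponent.adj_iso_apply_iff {V : Type*} {G : SimpleGraph V}
    {C : G.ConnectedComponent} (φ : G.induce C.supp ≃g G.induce C.supp) (x : C.supp) {u : V}
    (hu : ∀ hu : u ∈ C.supp, φ ⟨u, hu⟩ = ⟨u, hu⟩) : G.Adj (φ x) u ↔ G.Adj x u := by
  by_cases hC : u ∈ C.supp
  · have := φ.map_adj_iff (v := x) (w := ⟨u, hC⟩)
    rwa [hu hC] at this
  · exact iff_of_false (fun h => hC (C.mem_supp_of_adj_mem_supp (φ x).2 h))
      (fun h => hC (C.mem_supp_of_adj_mem_supp x.2 h))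

def cycleNorm {N : ℕ} (a : ZMod N) : ℕ := a.valMinAbs.natAbs

section CycleNorm

variable {N : ℕ}

lemma cycleNorm_neg (a : ZMod N) : cycleNorm (-a) = cycleNorm a :=
  ZMod.natAbs_valMinAbs_neg a

lemma cycleNorm_eq_zero_iff {a : ZMod N} : cycleNorm a = 0 ↔ a = 0 := by
  rw [cycleNorm, Int.natAbs_eq_zero, ZMod.valMinAbs_eq_zero]

lemma eq_one_or_eq_neg_one_of_cycleNorm_eq_one {a : ZMod N} (h : cycleNorm a = 1) :
    a = 1 ∨ a = -1 := by
  rw [← ZMod.coe_valMinAbs a]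
  rcases Int.natAbs_eq_iff.mp h with h | h <;> simp [h]

end CycleNorm

section EvenCycle

variable {n : ℕ} [NeZero n]

lemma cycleNorm_eq_min (a : ZMod (2 * n)) : cycleNorm a = min a.val (2 * n - a.val) :=
  ZMod.valMinAbs_natAbs_eq_min a

lemma ZMod.val_add_one_cases (a : ZMod (2 * n)) :
    (a + 1).val = a.val + 1 ∨ (a + 1).val = 0 ∧ a.val + 1 = 2 * n := by
  rw [ZMod.val_add, ZMod.val_one'' (by have := NeZero.ne n; omega)]
  rcases (Nat.lt_or_ge (a.val + 1) (2 * n)) with h | h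
  · exact Or.inl (Nat.mod_eq_of_lt h)
  · have : a.val + 1 = 2 * n := le_antisymm (ZMod.val_lt a) h
    exact Or.inr ⟨by rw [this, Nat.mod_self], this⟩

lemma cycleNorm_add_one (a : ZMod (2 * n)) :
    cycleNorm (a + 1) = cycleNorm a + 1 ∨ cycleNorm a = cycleNorm (a + 1) + 1 := by
  have := ZMod.val_lt a
  rcases ZMod.val_add_one_cases a with h | h <;>
    simp only [cycleNorm_eq_min] <;> omega

lemma cycleNorm_mod_two_ne {a b : ZMod (2 * n)} (h : a - b = 1 ∨ a - b = -1) :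
    cycleNorm a % 2 ≠ cycleNorm b % 2 := by
  rcases h with h | h
  · obtain rfl : a = b + 1 := by linear_combination h
    have := cycleNorm_add_one b
    omega
  · obtain rfl : b = a + 1 := by linear_combination -h
    have := cycleNorm_add_one a
    omega

lemma eq_zero_of_cycleNorm_lt {a : ZMod (2 * n)} (h₁ : cycleNorm a < cycleNorm (a + 1))
    (h₂ : cycleNorm a < cycleNorm (a - 1)) : a = 0 := by
  have := ZMod.val_lt a
  have := ZMod.val_lt (a - 1)
  have hprev := ZMod.val_add_one_cases (a - 1)
  rw [sub_add_cancel] at hprev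
  rw [← cycleNorm_eq_zero_iff]
  rcases ZMod.val_add_one_cases a with h | h <;>
    simp only [cycleNorm_eq_min] at * <;> omega

end EvenCycle

def lowerNbrs {N : ℕ} (k : ℕ) (a : ZMod N) : Set (ZMod N) :=
  {c | (c = a + 1 ∨ c = a - 1) ∧ cycleNorm c ≤ k}

lemma lowerNbrs_neg {N k : ℕ} (a : ZMod N) : lowerNbrs k (-a) = -lowerNbrs k a := by
  ext c
  have e₁ : c = -a + 1 ↔ -c = a - 1 := by constructor <;> intro h <;> linear_combination -h
  have e₂ : c = -a - 1 ↔ -c = a + 1 := by constructor <;> intro h <;> linear_combination -h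
  simp only [lowerNbrs, Set.mem_neg, Set.mem_ofPred_eq, cycleNorm_neg, e₁, e₂, or_comm]

section LowerNbrs

variable {n k : ℕ}

lemma lowerNbrs_nonempty [NeZero n] (hk : 1 ≤ k) {a : ZMod (2 * n)}
    (ha : cycleNorm a ≤ k + 1) : (lowerNbrs k a).Nonempty := by
  by_cases h₁ : cycleNorm (a + 1) ≤ k
  · exact ⟨a + 1, Or.inl rfl, h₁⟩
  by_cases h₂ : cycleNorm (a - 1) ≤ k
  · exact ⟨a - 1, Or.inr rfl, h₂⟩
  have s₁ := cycleNorm_add_one a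
  have s₂ := cycleNorm_add_one (a - 1)
  rw [sub_add_cancel] at s₂
  have h₀ := cycleNorm_eq_zero_iff.mpr (eq_zero_of_cycleNorm_lt (a := a) (by omega) (by omega))
  omega

lemma lowerNbrs_sub_one_ne_add_one (hn : 3 ≤ n) (hk : 1 ≤ k) {c : ZMod (2 * n)}
    (hc : cycleNorm (c - 1) ≤ k + 1) (hpar : cycleNorm (c - 1) % 2 = (k + 1) % 2) :
    lowerNbrs k (c - 1) ≠ lowerNbrs k (c + 1) := by
  have : NeZero n := ⟨by omega⟩
  intro h
  have h₂ : (2 : ZMod (2 * n)) ≠ 0 := fun h₀ => by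
    simpa [h₀] using ZMod.val_ofNat_of_lt (a := 2) (show 2 < 2 * n by omega)
  have h₄ : (4 : ZMod (2 * n)) ≠ 0 := fun h₀ => by
    simpa [h₀] using ZMod.val_ofNat_of_lt (a := 4) (show 4 < 2 * n by omega)
  have hlo : k < cycleNorm (c - 1 - 1) := by
    by_contra! hle
    obtain ⟨h' | h', -⟩ : c - 1 - 1 ∈ lowerNbrs k (c + 1) := h ▸ ⟨Or.inr rfl, hle⟩
    · exact h₄ (by linear_combination -h')
    · exact h₂ (by linear_combination -h')
  have hhi : k < cycleNorm (c + 1 + 1) := by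
    by_contra! hle
    obtain ⟨h' | h', -⟩ : c + 1 + 1 ∈ lowerNbrs k (c - 1) := h.symm ▸ ⟨Or.inl rfl, hle⟩
    · exact h₂ (by linear_combination h')
    · exact h₄ (by linear_combination h')
  have hmid : cycleNorm c ≤ k := by
    obtain ⟨d, hd | rfl, hdk⟩ := lowerNbrs_nonempty hk hc
    · rwa [hd, sub_add_cancel] at hdk
    · omega
  -- With the parity of `cycleNorm (c - 1)`, these bounds make `c` a strict local minimum of
  -- `cycleNorm` of value `k ≥ 1`, which only `0` can be.
  have s₁ := cycleNorm_add_one (c - 1 - 1)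
  have s₂ := cycleNorm_add_one (c - 1)
  have s₃ := cycleNorm_add_one c
  have s₄ := cycleNorm_add_one (c + 1)
  rw [sub_add_cancel] at s₁ s₂
  have h₀ := cycleNorm_eq_zero_iff.mpr (eq_zero_of_cycleNorm_lt (a := c) (by omega) (by omega))
  omega

lemma eq_of_lowerNbrs_eq (hn : 3 ≤ n) (hk : 1 ≤ k) {a b : ZMod (2 * n)}
    (ha : cycleNorm a ≤ k + 1) (hpar : cycleNorm a % 2 = (k + 1) % 2)
    (h : lowerNbrs k a = lowerNbrs k b) : a = b := by
  have : NeZero n := ⟨by omega⟩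
  obtain ⟨c, hca, hck⟩ := lowerNbrs_nonempty hk ha
  obtain ⟨hcb, -⟩ : c ∈ lowerNbrs k b := h ▸ ⟨hca, hck⟩
  rcases hca with hca | hca <;> rcases hcb with hcb | hcb
  · exact add_right_cancel (hca.symm.trans hcb)
  · obtain rfl : a = c - 1 := eq_sub_of_add_eq hca.symm
    obtain rfl : b = c + 1 := (eq_add_of_sub_eq hcb.symm)
    exact absurd h (lowerNbrs_sub_one_ne_add_one hn hk ha hpar)
  · obtain rfl : a = c + 1 := eq_add_of_sub_eq hca.symm
    obtain rfl : b = c - 1 := eq_sub_of_add_eq hcb.symm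
    have hne := lowerNbrs_sub_one_ne_add_one hn hk (c := -c)
      (by rwa [← neg_add', cycleNorm_neg]) (by rwa [← neg_add', cycleNorm_neg])
    rw [← neg_add', show -c + 1 = -(c - 1) by ring, lowerNbrs_neg, lowerNbrs_neg, h] at hne
    exact absurd rfl hne
  · exact sub_left_inj.mp (hca.symm.trans hcb)

end LowerNbrs

def maxCycleNorm {ι : Type*} [Fintype ι] {N : ℕ} (x : ι → ZMod N) : ℕ :=
  Finset.univ.sup fun i => cycleNorm (x i)

section MaxCycleNorm

variable {ι : Type*} [Fintype ι] {N k : ℕ} {x : ι → ZMod N}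

lemma maxCycleNorm_le_iff : maxCycleNorm x ≤ k ↔ ∀ i, cycleNorm (x i) ≤ k := by
  simp [maxCycleNorm, Finset.sup_le_iff]

lemma maxCycleNorm_eq_zero_iff : maxCycleNorm x = 0 ↔ x = 0 := by
  rw [← Nat.le_zero, maxCycleNorm_le_iff, funext_iff]
  simp only [Nat.le_zero, cycleNorm_eq_zero_iff, Pi.zero_apply]

lemma exists_cycleNorm_eq_maxCycleNorm (h : 0 < maxCycleNorm x) :
    ∃ i, cycleNorm (x i) = maxCycleNorm x := by
  have hne : (Finset.univ : Finset ι).Nonempty := by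
    by_contra he
    simp [maxCycleNorm, Finset.not_nonempty_iff_eq_empty.mp he] at h
  obtain ⟨i, -, hi⟩ := Finset.exists_mem_eq_sup _ hne fun i => cycleNorm (x i)
  exact ⟨i, hi.symm⟩

end MaxCycleNorm

section CycleTensor

variable {n m k : ℕ}

lemma cycleTensor_adj_iff [Nonempty (Fin m)] {x u : Fin m → ZMod (2 * n)} :
    (cycleTensor n m).Adj x u ↔ ∀ i, u i = x i + 1 ∨ u i = x i - 1 := by
  have : Nontrivial (ZMod (2 * n)) := ZMod.nontrivial_iff.mpr (by omega)
  have hcoord : ∀ i, (x i - u i = 1 ∨ x i - u i = -1) ↔ (u i = x i + 1 ∨ u i = x i - 1) :=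
    fun i => or_comm.trans (or_congr (by constructor <;> intro h <;> linear_combination -h)
      (by constructor <;> intro h <;> linear_combination -h))
  refine ⟨fun h i => (hcoord i).mp (h.2 i), fun h => ⟨fun hxu => ?_, fun i => (hcoord i).mpr (h i)⟩⟩
  obtain ⟨i⟩ := ‹Nonempty (Fin m)›
  subst hxu
  rcases h i with h | h
  exacts [one_ne_zero (by linear_combination -h), one_ne_zero (by linear_combination h)]

lemma cycleTensor_adj_and_maxCycleNorm_le_iff [Nonempty (Fin m)] {x u : Fin m → ZMod (2 * n)} :
    (cycleTensor n m).Adj x u ∧ maxCycleNorm u ≤ k ↔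
      u ∈ Set.univ.pi fun i => lowerNbrs k (x i) := by
  simp only [cycleTensor_adj_iff, maxCycleNorm_le_iff, Set.mem_univ_pi, lowerNbrs,
    Set.mem_ofPred_eq, forall_and]

variable [NeZero n]

lemma cycleNorm_mod_two_eq_of_mem_supp {x : Fin m → ZMod (2 * n)}
    (hx : x ∈ ((cycleTensor n m).connectedComponentMk 0).supp) (i j : Fin m) :
    cycleNorm (x i) % 2 = cycleNorm (x j) % 2 := by
  have hreach := (SimpleGraph.reachable_iff_reflTransGen 0 x).mp
    (SimpleGraph.ConnectedComponent.exact hx).symm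
  clear hx
  induction hreach with
  | refl => rfl
  | tail _ hadj ih =>
    have := cycleNorm_mod_two_ne (hadj.2 i)
    have := cycleNorm_mod_two_ne (hadj.2 j)
    omega

lemma eq_zero_or_forall_eq_one_or_eq_neg_one {x : Fin m → ZMod (2 * n)}
    (hx : x ∈ ((cycleTensor n m).connectedComponentMk 0).supp) (h : maxCycleNorm x ≤ 1) :
    x = 0 ∨ ∀ i, x i = 1 ∨ x i = -1 := by
  rcases Nat.eq_zero_or_pos (maxCycleNorm x) with h₀ | hpos
  · exact Or.inl (maxCycleNorm_eq_zero_iff.mp h₀)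
  obtain ⟨i₀, hi₀⟩ := exists_cycleNorm_eq_maxCycleNorm hpos
  refine Or.inr fun i => eq_one_or_eq_neg_one_of_cycleNorm_eq_one ?_
  have := cycleNorm_mod_two_eq_of_mem_supp hx i i₀
  have := maxCycleNorm_le_iff.mp h i
  omega

end CycleTensor

lemma apply_eq_self_of_forall_maxCycleNorm_le {n m k : ℕ} (hn : 3 ≤ n) (hk : 1 ≤ k)
    (φ : cycleTensorComp n m ≃g cycleTensorComp n m)
    (hfixed : ∀ y : ((cycleTensor n m).connectedComponentMk 0).supp,
      maxCycleNorm (y : Fin m → ZMod (2 * n)) ≤ k → φ y = y)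
    (x : ((cycleTensor n m).connectedComponentMk 0).supp)
    (hx : maxCycleNorm (x : Fin m → ZMod (2 * n)) ≤ k + 1) : φ x = x := by
  have : NeZero n := ⟨by omega⟩
  by_cases hxk : maxCycleNorm (x : Fin m → ZMod (2 * n)) ≤ k
  · exact hfixed x hxk
  obtain ⟨i₀, hi₀⟩ := exists_cycleNorm_eq_maxCycleNorm (x := (x : Fin m → ZMod (2 * n)))
    (by omega)
  have : Nonempty (Fin m) := ⟨i₀⟩
  have hcoord := maxCycleNorm_le_iff.mp hx
  have hpar : ∀ i, cycleNorm ((x : Fin m → ZMod (2 * n)) i) % 2 = (k + 1) % 2 := fun i => by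
    rw [cycleNorm_mod_two_eq_of_mem_supp x.2 i i₀, hi₀, le_antisymm hx (by omega)]
  have hpi : (Set.univ.pi fun i => lowerNbrs k ((x : Fin m → ZMod (2 * n)) i)) =
      Set.univ.pi fun i => lowerNbrs k ((φ x : Fin m → ZMod (2 * n)) i) := by
    ext u
    rw [← cycleTensor_adj_and_maxCycleNorm_le_iff, ← cycleTensor_adj_and_maxCycleNorm_le_iff]
    exact and_congr_left fun hu => (SimpleGraph.ConnectedComponent.adj_iso_apply_iff φ x
      fun hu' => hfixed ⟨u, hu'⟩ hu).symm
  have hnbrs := Set.eq_of_univ_pi_eq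
    (Set.univ_pi_nonempty_iff.mpr fun i => lowerNbrs_nonempty hk (hcoord i)) hpi
  exact Subtype.ext (funext fun i =>
    (eq_of_lowerNbrs_eq hn hk (hcoord i) (hpar i) (congr_fun hnbrs i)).symm)

theorem cycle_tensor_component_rigid_general (n m : ℕ) (hn : 3 ≤ n)
    (φ : (cycleTensorComp n m) ≃g (cycleTensorComp n m))
    (hfix : ∀ x : ((cycleTensor n m).connectedComponentMk 0).supp,
      ((x : Fin m → ZMod (2 * n)) = 0 ∨
        (∀ i, (x : Fin m → ZMod (2 * n)) i = 1 ∨ (x : Fin m → ZMod (2 * n)) i = -1)) →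
      φ x = x) :
    ∀ x, φ x = x := by
  have : NeZero n := ⟨by omega⟩
  have hball : ∀ k, 1 ≤ k → ∀ x : ((cycleTensor n m).connectedComponentMk 0).supp,
      maxCycleNorm (x : Fin m → ZMod (2 * n)) ≤ k → φ x = x := by
    intro k hk
    induction k, hk using Nat.le_induction with
    | base => exact fun x hx => hfix x (eq_zero_or_forall_eq_one_or_eq_neg_one x.2 hx)
    | succ k hk ih => exact apply_eq_self_of_forall_maxCycleNorm_le hn hk φ ih
  exact fun x => hball _ (le_max_left 1 _) x (le_max_right _ _)

/-- Let `n ≥ 3`, `m ≥ 1`, and let `Γ` be the connected component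
containing `v = (0,…,0)` of the tensor product of `m` cycles of length `2n`.
If an automorphism of `Γ` fixes `v` and all `2^m` neighbours `(±1,…,±1)` of `v`,
then it is the identity. -/
theorem cycle_tensor_component_rigid (n m : ℕ) (hn : 3 ≤ n) (hm : 1 ≤ m)
    (φ : (cycleTensorComp n m) ≃g (cycleTensorComp n m))
    (hfix : ∀ x : ((cycleTensor n m).connectedComponentMk 0).supp,
      ((x : Fin m → ZMod (2 * n)) = 0 ∨
        (∀ i, (x : Fin m → ZMod (2 * n)) i = 1 ∨ (x : Fin m → ZMod (2 * n)) i = -1)) →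
      φ x = x) :
    ∀ x, φ x = x :=
  cycle_tensor_component_rigid_general n m hn φ hfix
end
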